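/- For positive integers p ≥ q ≥ r, if p − q − r + 1 ≥ 0 then the product [p]·[q]·[r] is a trapezoidal polynomial whose stable part has length exactly p − q − r + 1, and this length satisfies p − q − r + 1 ≤ p + r − q − 1. -/

import Mathlib

/-!
Since `[r] * (s - 1) = s^r - 1`, consecutive coefficients of `F = [p][q][r]` differ by
`c (k + 1) - c (k + 1 - r)`, where `c m = min (m + 1) p - max (m + 1 - q) 0` are the
coefficients of `[p][q]`: they rise up to `m = q - 1`, stay at `q` up to `m = p - 1`, then fall.
When `p ≥ q + r - 1` this difference is therefore positive for `k < q + r - 2`, zero for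
`q + r - 2 ≤ k < p - 1` and negative afterwards, so `F` is trapezoidal with a plateau running
from `q + r - 2` to `p - 1`; in a trapezoid every run of equal coefficients lies in the plateau.
-/

open Polynomial

/-- `qpoly n = 1 + s + ⋯ + s^(n-1)`, denoted `[n]` in the paper. -/
noncomputable def qpoly (n : ℕ) : Polynomial ℝ :=
  ∑ i ∈ Finset.range n, Polynomial.X ^ i

/-- All coefficients of `p` over its support `0, …, natDegree p` are positive. -/
def PosCoeffs (p : Polynomial ℝ) : Prop :=
  ∀ k ≤ p.natDegree, 0 < p.coeff k

/-- `p` is symmetric: its coefficient sequence over its support reads the same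
forwards and backwards. -/
def SymmetricPoly (p : Polynomial ℝ) : Prop :=
  ∀ k ≤ p.natDegree, p.coeff k = p.coeff (p.natDegree - k)

/-- `p` is trapezoidal: its coefficients strictly increase, then are constant,
then strictly decrease. -/
def Trapezoidal (p : Polynomial ℝ) : Prop :=
  ∃ i j : ℕ, i ≤ j ∧ j ≤ p.natDegree ∧
    (∀ k, k < i → p.coeff k < p.coeff (k + 1)) ∧
    (∀ k, i ≤ k → k < j → p.coeff k = p.coeff (k + 1)) ∧
    (∀ k, j ≤ k → k < p.natDegree → p.coeff (k + 1) < p.coeff k)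

/-- `p` has a run of `l + 1` equal consecutive coefficients within its support. -/
def HasRun (p : Polynomial ℝ) (l : ℕ) : Prop :=
  ∃ k0 : ℕ, k0 + l ≤ p.natDegree ∧ ∀ i ≤ l, p.coeff (k0 + i) = p.coeff k0

/-- The stable part of `p` has length `l`: `l` is the largest integer such that
some `l + 1` consecutive coefficients of `p` are all equal. -/
def StableLength (p : Polynomial ℝ) (l : ℕ) : Prop :=
  HasRun p l ∧ ∀ l', HasRun p l' → l' ≤ l

lemma hasRun_of_coeff_eq_succ {f : ℝ[X]} {i j : ℕ} (hij : i ≤ j) (hj : j ≤ f.natDegree)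
    (hconst : ∀ k, i ≤ k → k < j → f.coeff k = f.coeff (k + 1)) : HasRun f (j - i) := by
  refine ⟨i, by omega, fun m hm => ?_⟩
  induction m with
  | zero => rfl
  | succ m ih => rw [← add_assoc, ← hconst (i + m) (by omega) (by omega), ih (by omega)]

lemma stableLength_of_trapezoid {f : ℝ[X]} {i j : ℕ} (hij : i ≤ j) (hj : j ≤ f.natDegree)
    (hinc : ∀ k, k < i → f.coeff k < f.coeff (k + 1))
    (hconst : ∀ k, i ≤ k → k < j → f.coeff k = f.coeff (k + 1))
    (hdec : ∀ k, j ≤ k → k < f.natDegree → f.coeff (k + 1) < f.coeff k) :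
    StableLength f (j - i) := by
  refine ⟨hasRun_of_coeff_eq_succ hij hj hconst, fun l ⟨k₀, hk₀, hrun⟩ => ?_⟩
  by_contra! hl
  have hflat : ∀ k, k₀ ≤ k → k < k₀ + l → f.coeff k = f.coeff (k + 1) := by
    intro k hk₁ hk₂
    obtain ⟨m, rfl⟩ := Nat.exists_eq_add_of_le hk₁
    rw [hrun m (by omega), add_assoc, hrun (m + 1) (by omega)]
  -- a run longer than the plateau contains a strict step: at `k₀` if it starts
  -- before the plateau, and at `max k₀ j` otherwise
  rcases lt_or_ge k₀ i with hk | hk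
  · exact (hinc k₀ hk).ne (hflat k₀ le_rfl (by omega))
  · exact (hdec (max k₀ j) (le_max_right _ _) (by omega)).ne'
      (hflat _ (le_max_left _ _) (by omega))

lemma coeff_qpoly (n k : ℕ) : (qpoly n).coeff k = if k < n then 1 else 0 := by
  simp [qpoly, coeff_X_pow]

lemma monic_qpoly {n : ℕ} (hn : n ≠ 0) : (qpoly n).Monic :=
  monic_geom_sum_X hn

lemma natDegree_qpoly {n : ℕ} (hn : n ≠ 0) : (qpoly n).natDegree = n - 1 := by
  refine natDegree_eq_of_le_of_coeff_ne_zero ?_ (by simp [coeff_qpoly, hn])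
  exact natDegree_le_iff_coeff_eq_zero.2 fun k hk => by simp [coeff_qpoly]; omega

lemma coeff_mul_qpoly_succ (f : ℝ[X]) (r k : ℕ) :
    (f * qpoly r).coeff (k + 1) =
      (f * qpoly r).coeff k + f.coeff (k + 1) - (f * X ^ r).coeff (k + 1) := by
  have hgeom : f * qpoly r * (X - C 1) = f * X ^ r - f := by
    rw [mul_assoc, map_one, qpoly, geom_sum_mul, mul_sub, mul_one]
  have h := congrArg (coeff · (k + 1)) hgeom
  simp only [coeff_mul_X_sub_C, mul_one, coeff_sub] at h
  linarith

/-- The coefficient of `s^m` in `[p][q]`, i.e. the number of `i < p`, `j < q` with `i + j = m`. -/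
def qpolyMulCoeff (p q m : ℕ) : ℕ := min (m + 1) p - (m + 1 - q)

lemma coeff_qpoly_mul_qpoly (p q m : ℕ) :
    (qpoly p * qpoly q).coeff m = qpolyMulCoeff p q m := by
  rw [coeff_mul, Finset.Nat.sum_antidiagonal_eq_sum_range_succ_mk]
  simp only [coeff_qpoly, ite_mul, one_mul, zero_mul, ← ite_and]
  rw [Finset.sum_boole]
  have : (Finset.range m.succ).filter (fun i => i < p ∧ m - i < q)
      = Finset.Ico (m + 1 - q) (min (m + 1) p) := by
    ext i
    simp only [Finset.mem_filter, Finset.mem_range, Finset.mem_Ico, lt_min_iff]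
    omega
  rw [this, Nat.card_Ico, qpolyMulCoeff]

lemma coeff_qpoly_mul_qpoly_mul_qpoly_succ (p q r k : ℕ) :
    (qpoly p * qpoly q * qpoly r).coeff (k + 1) =
      (qpoly p * qpoly q * qpoly r).coeff k + qpolyMulCoeff p q (k + 1)
        - ((if r ≤ k + 1 then qpolyMulCoeff p q (k + 1 - r) else 0 : ℕ) : ℝ) := by
  rw [coeff_mul_qpoly_succ, coeff_mul_X_pow', coeff_qpoly_mul_qpoly]
  split_ifs <;> simp [coeff_qpoly_mul_qpoly]

section
variable {p q r k : ℕ}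

lemma coeff_qpoly_mul_qpoly_mul_qpoly_lt_succ (hr : 1 ≤ r) (hqr : r ≤ q) (hpq : q ≤ p)
    (h : q + r ≤ p + 1) (hk : k < q + r - 2) :
    (qpoly p * qpoly q * qpoly r).coeff k < (qpoly p * qpoly q * qpoly r).coeff (k + 1) := by
  have : (if r ≤ k + 1 then qpolyMulCoeff p q (k + 1 - r) else 0) <
      qpolyMulCoeff p q (k + 1) := by
    unfold qpolyMulCoeff; split_ifs <;> omega
  rw [coeff_qpoly_mul_qpoly_mul_qpoly_succ]
  linarith [(Nat.cast_lt (α := ℝ)).2 this]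

lemma coeff_qpoly_mul_qpoly_mul_qpoly_eq_succ (hk₁ : q + r - 2 ≤ k) (hk₂ : k < p - 1) :
    (qpoly p * qpoly q * qpoly r).coeff k = (qpoly p * qpoly q * qpoly r).coeff (k + 1) := by
  have : (if r ≤ k + 1 then qpolyMulCoeff p q (k + 1 - r) else 0) =
      qpolyMulCoeff p q (k + 1) := by
    unfold qpolyMulCoeff; split_ifs <;> omega
  rw [coeff_qpoly_mul_qpoly_mul_qpoly_succ, this]
  ring

lemma coeff_qpoly_mul_qpoly_mul_qpoly_succ_lt (hr : 1 ≤ r) (hqr : r ≤ q)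
    (h : q + r ≤ p + 1) (hk₁ : p - 1 ≤ k) (hk₂ : k ≤ p + q + r - 4) :
    (qpoly p * qpoly q * qpoly r).coeff (k + 1) < (qpoly p * qpoly q * qpoly r).coeff k := by
  have : qpolyMulCoeff p q (k + 1) <
      (if r ≤ k + 1 then qpolyMulCoeff p q (k + 1 - r) else 0) := by
    unfold qpolyMulCoeff; split_ifs <;> omega
  rw [coeff_qpoly_mul_qpoly_mul_qpoly_succ]
  linarith [(Nat.cast_lt (α := ℝ)).2 this]

end

theorem trapezoidal_qpoly_mul (p q r : ℕ) (hr : 1 ≤ r) (hqr : r ≤ q) (hpq : q ≤ p)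
    (h : q + r ≤ p + 1) :
    Trapezoidal (qpoly p * qpoly q * qpoly r) ∧
      StableLength (qpoly p * qpoly q * qpoly r) (p + 1 - q - r) ∧
      p + 1 - q - r ≤ p + r - q - 1 := by
  set F := qpoly p * qpoly q * qpoly r
  have hdeg : F.natDegree = p + q + r - 3 := by
    have hp := monic_qpoly (n := p) (by omega)
    have hq := monic_qpoly (n := q) (by omega)
    rw [(hp.mul hq).natDegree_mul (monic_qpoly (by omega)), hp.natDegree_mul hq,
      natDegree_qpoly (by omega), natDegree_qpoly (by omega), natDegree_qpoly (by omega)]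
    omega
  have hinc : ∀ k, k < q + r - 2 → F.coeff k < F.coeff (k + 1) :=
    fun _ => coeff_qpoly_mul_qpoly_mul_qpoly_lt_succ hr hqr hpq h
  have hconst : ∀ k, q + r - 2 ≤ k → k < p - 1 → F.coeff k = F.coeff (k + 1) :=
    fun _ => coeff_qpoly_mul_qpoly_mul_qpoly_eq_succ
  have hdec : ∀ k, p - 1 ≤ k → k < F.natDegree → F.coeff (k + 1) < F.coeff k :=
    fun _ hk₁ _ => coeff_qpoly_mul_qpoly_mul_qpoly_succ_lt hr hqr h hk₁ (by omega)
  have hstable := stableLength_of_trapezoid (by omega) (by omega) hinc hconst hdec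
  refine ⟨⟨_, _, by omega, by omega, hinc, hconst, hdec⟩, ?_, by omega⟩
  rwa [show p - 1 - (q + r - 2) = p + 1 - q - r by omega] at hstable
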